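/- Let T be the group of finitary permutations of the positive integers, acting on 𝔅 via σ ↦ f_σ. Then (𝔅,T) is not co-decomposable to distal transformation semigroups: for every family (S_α)_{α∈Γ} of subsemigroups of T, each containing the identity, whose union generates T and which satisfies the multi condition (for distinct α_1,…,α_n, elements s_j ∈ S_{α_j}, every x ∈ 𝔅 and every permutation m of {1,…,n}, x f_{s_1}⋯f_{s_n} = x f_{s_{m_1}}⋯f_{s_{m_n}}), there exists α ∈ Γ such that the action of S_α on 𝔅 is not distal. -/
import Mathlib


open Pointwise Classical

/-- 𝔅 = {0} ∪ {1/n : n a positive integer} as a subspace of ℝ. -/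
def Bset : Set ℝ := {x | x = 0 ∨ ∃ n : ℕ+, x = 1 / ((n : ℕ) : ℝ)}

/-- The homeomorphism `f_σ` of `𝔅` induced by a permutation `σ` of the positive
integers: `(1/k) f_σ = 1/σ(k)` and `0 f_σ = 0`. -/
noncomputable def fPerm (σ : Equiv.Perm ℕ+) (x : Bset) : Bset :=
  if h : ∃ n : ℕ+, (x : ℝ) = 1 / ((n : ℕ) : ℝ) then
    ⟨1 / (((σ h.choose : ℕ+) : ℕ) : ℝ), Or.inr ⟨σ h.choose, rfl⟩⟩
  else ⟨0, Or.inl rfl⟩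

/-- The pair `(x, y)` is proximal for the set `S` of self-maps of `X`. -/
def IsProximal {X : Type*} [TopologicalSpace X] (S : Set (X → X)) (x y : X) : Prop :=
  ∃ z : X, (z, z) ∈ closure {p : X × X | ∃ f ∈ S, p = (f x, f y)}

/-- The action of the set `S` of self-maps of `X` is distal. -/
def IsDistalAction {X : Type*} [TopologicalSpace X] (S : Set (X → X)) : Prop :=
  ∀ x y : X, IsProximal S x y → x = y

/-- The set of self-maps of `𝔅` induced by a set of permutations. -/
noncomputable def permAct (S : Set (Equiv.Perm ℕ+)) : Set (Bset → Bset) :=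
  {f | ∃ σ ∈ S, f = fPerm σ}

/-- The orbit `xS` of a point of `𝔅`. -/
def pointOrbit (x : Bset) (S : Set (Equiv.Perm ℕ+)) : Set Bset :=
  {y | ∃ σ ∈ S, y = fPerm σ x}

/-- `P S = {x σ : x ∈ P, σ ∈ S}`, the action of a set of permutations on a set of points. -/
def actSet (P : Set Bset) (S : Set (Equiv.Perm ℕ+)) : Set Bset :=
  {y | ∃ x ∈ P, ∃ σ ∈ S, y = fPerm σ x}

/-- `T_n`: permutations fixing every `k > n`. -/
def TnSet (n : ℕ+) : Set (Equiv.Perm ℕ+) := {σ | ∀ k : ℕ+, n < k → σ k = k}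

/-- `T`: the finitary permutations of the positive integers. -/
def Tfin : Set (Equiv.Perm ℕ+) := {σ | ∃ n : ℕ+, ∀ k : ℕ+, n < k → σ k = k}

noncomputable def onePt : Bset := ⟨1, Or.inr ⟨1, by norm_num⟩⟩
def zeroPt : Bset := ⟨0, Or.inl rfl⟩

noncomputable def bpt (k : ℕ+) : Bset := ⟨1 / ((k : ℕ) : ℝ), Or.inr ⟨k, rfl⟩⟩

lemma one_div_pnat_inj {a b : ℕ+} (h : 1 / ((a : ℕ) : ℝ) = 1 / ((b : ℕ) : ℝ)) : a = b := by
  have ha : ((a : ℕ) : ℝ) ≠ 0 := by positivity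
  have hb : ((b : ℕ) : ℝ) ≠ 0 := by positivity
  field_simp at h
  exact_mod_cast h.symm

lemma bpt_injective : Function.Injective bpt := by
  intro a b h
  exact one_div_pnat_inj (congrArg (fun x : Bset => (x : ℝ)) h)

lemma fPerm_bpt (σ : Equiv.Perm ℕ+) (k : ℕ+) : fPerm σ (bpt k) = bpt (σ k) := by
  have h : ∃ n : ℕ+, ((bpt k : ℝ)) = 1 / ((n : ℕ) : ℝ) := ⟨k, rfl⟩
  rw [fPerm, dif_pos h]
  have hc : h.choose = k := (one_div_pnat_inj h.choose_spec.symm)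
  apply Subtype.ext
  show (1 : ℝ) / ((σ h.choose : ℕ) : ℝ) = 1 / ((σ k : ℕ) : ℝ)
  rw [hc]

lemma fPerm_zero (σ : Equiv.Perm ℕ+) : fPerm σ zeroPt = zeroPt := by
  rw [fPerm, dif_neg]; rfl
  rintro ⟨n, hn⟩
  have h1 : (0:ℝ) < 1 / ((n : ℕ) : ℝ) := by positivity
  have h2 : ((zeroPt : Bset) : ℝ) = 0 := rfl
  rw [h2] at hn
  linarith





lemma tn_maps_le {n : ℕ+} {σ : Equiv.Perm ℕ+} (hσ : σ ∈ TnSet n) {k : ℕ+} (hk : k ≤ n) :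
    σ k ≤ n := by
  by_contra h
  push_neg at h
  have h1 : σ (σ k) = σ k := hσ (σ k) h
  have h2 : σ k = k := σ.injective h1
  rw [h2] at h
  exact absurd hk (not_le.2 h)

lemma finite_TnSet (n : ℕ+) : (TnSet n).Finite := by
  have h1 : Finite {k : ℕ+ // k ≤ n} := by
    apply Finite.of_injective (fun k : {k : ℕ+ // k ≤ n} =>
      (⟨(k.1 : ℕ) - 1, by
        have h1 : 1 ≤ (k.1 : ℕ) := k.1.2
        have h2 : (k.1 : ℕ) ≤ (n : ℕ) := (PNat.coe_le_coe _ _).2 k.2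
        show (k.1 : ℕ) - 1 < (n : ℕ)
        omega⟩ : Fin n))
    intro a b hab
    have h3 : ((a : ℕ+) : ℕ) - 1 = ((b : ℕ+) : ℕ) - 1 := by
      simpa using congrArg Fin.val hab
    have ha : 0 < ((a : ℕ+) : ℕ) := (a : ℕ+).2
    have hb : 0 < ((b : ℕ+) : ℕ) := (b : ℕ+).2
    apply Subtype.ext
    apply PNat.coe_injective
    omega
  rw [← Set.finite_coe_iff]
  apply Finite.of_injective (fun σ : TnSet n => fun k : {k : ℕ+ // k ≤ n} =>
    (⟨σ.1 k, tn_maps_le σ.2 k.2⟩ : {k : ℕ+ // k ≤ n}))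
  intro σ τ h
  apply Subtype.ext
  apply Equiv.ext
  intro k
  rcases le_or_gt k n with hk | hk
  · have := congrArg (fun f => (f ⟨k, hk⟩).1) h
    exact this
  · rw [σ.2 k hk, τ.2 k hk]

lemma exists_pow_eq_one {s : Equiv.Perm ℕ+} (hs : s ∈ Tfin) : ∃ m, 1 ≤ m ∧ s ^ m = 1 := by
  obtain ⟨n, hn⟩ := hs
  have hpow : ∀ i, s ^ i ∈ TnSet n := by
    intro i
    induction i with
    | zero => intro k _; simp
    | succ i ih =>
      intro k hk
      rw [pow_succ, Equiv.Perm.mul_apply, hn k hk]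
      exact ih k hk
  have : Finite (TnSet n) := Set.finite_coe_iff.2 (finite_TnSet n)
  obtain ⟨i, j, hij, heq⟩ := Finite.exists_ne_map_eq_of_infinite
    (fun i : ℕ => (⟨s ^ i, hpow i⟩ : TnSet n))
  have heq' : s ^ i = s ^ j := congrArg Subtype.val heq
  rcases lt_or_gt_of_ne hij with h | h
  · refine ⟨j - i, by omega, ?_⟩
    have h2 : s ^ i * s ^ (j - i) = s ^ i * 1 := by
      rw [mul_one, ← pow_add, show i + (j - i) = j by omega]
      exact heq'.symm
    exact mul_left_cancel h2
  · refine ⟨i - j, by omega, ?_⟩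
    have h2 : s ^ j * s ^ (i - j) = s ^ j * 1 := by
      rw [mul_one, ← pow_add, show j + (i - j) = i by omega]
      exact heq'
    exact mul_left_cancel h2

lemma swap_mem_Tfin (a b : ℕ+) : Equiv.swap a b ∈ Tfin :=
  ⟨max a b, fun k hk => Equiv.swap_apply_of_ne_of_ne
    ((lt_of_le_of_lt (le_max_left a b) hk).ne')
    ((lt_of_le_of_lt (le_max_right a b) hk).ne')⟩







lemma not_distal_of_unbounded (S : Set (Equiv.Perm ℕ+)) (j : ℕ+)
    (h : ∀ N : ℕ, ∃ σ ∈ S, N < ((σ j : ℕ+) : ℕ)) :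
    ¬ IsDistalAction (permAct S) := by
  intro hd
  choose σ hσS hσ using h
  have hprox : IsProximal (permAct S) (bpt j) zeroPt := by
    refine ⟨zeroPt, ?_⟩
    apply mem_closure_of_tendsto
      (f := fun N : ℕ => ((bpt ((σ N) j), zeroPt) : Bset × Bset)) (b := Filter.atTop)
    · refine Filter.Tendsto.prodMk_nhds ?_ tendsto_const_nhds
      rw [tendsto_subtype_rng]
      have hz : ((zeroPt : Bset) : ℝ) = 0 := rfl
      rw [hz]
      apply squeeze_zero (g := fun N : ℕ => 1 / ((N : ℝ) + 1))
      · intro N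
        show (0:ℝ) ≤ 1 / ((((σ N) j : ℕ+) : ℕ) : ℝ)
        positivity
      · intro N
        show 1 / ((((σ N) j : ℕ+) : ℕ) : ℝ) ≤ 1 / ((N : ℝ) + 1)
        apply one_div_le_one_div_of_le
        · positivity
        · have := hσ N
          have h1 : (N : ℕ) + 1 ≤ ((σ N) j : ℕ) := this
          exact_mod_cast h1
      · exact tendsto_one_div_add_atTop_nhds_zero_nat
    · filter_upwards with N
      exact ⟨fPerm (σ N), ⟨σ N, hσS N, rfl⟩, by rw [fPerm_bpt, fPerm_zero]⟩
  have heq := hd _ _ hprox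
  have : ((bpt j : Bset) : ℝ) = ((zeroPt : Bset) : ℝ) := by rw [heq]
  have hpos : (0:ℝ) < 1 / ((j : ℕ) : ℝ) := by positivity
  have hz : ((zeroPt : Bset) : ℝ) = 0 := rfl
  rw [hz] at this
  have hb : ((bpt j : Bset) : ℝ) = 1 / ((j : ℕ) : ℝ) := rfl
  rw [hb] at this
  linarith

lemma inv_mem_aux (S : Set (Equiv.Perm ℕ+)) (hS : S ⊆ Tfin) (hid1 : (1 : Equiv.Perm ℕ+) ∈ S)
    (hcl : ∀ σ ∈ S, ∀ τ ∈ S, σ * τ ∈ S) {s : Equiv.Perm ℕ+} (hs : s ∈ S) : s⁻¹ ∈ S := by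
  obtain ⟨m, hm1, hm⟩ := exists_pow_eq_one (hS hs)
  have hpow : ∀ k, 1 ≤ k → s ^ k ∈ S := by
    intro k hk
    induction k with
    | zero => omega
    | succ k ih =>
      rcases Nat.eq_or_lt_of_le hk with h | h
      · rw [← h, pow_one]; exact hs
      · rw [pow_succ]
        exact hcl _ (ih (by omega)) _ hs
  rcases Nat.lt_or_ge m 2 with h2 | h2
  · have hm1' : m = 1 := by omega
    rw [hm1', pow_one] at hm
    rw [hm]
    simpa using hid1
  · have hmul : s * s ^ (m - 1) = 1 := by
      rw [← pow_succ', show m - 1 + 1 = m by omega]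
      exact hm
    rw [inv_eq_of_mul_eq_one_right hmul]
    exact hpow _ (by omega)

/-- `(𝔅,T)` (with `T` the finitary permutations) is not co-decomposable
to distal transformation semigroups: for every family of subsemigroups of `T`, each
containing the identity, whose union generates `T` and which satisfies the multi
condition, some member acts non-distally on `𝔅`. -/
theorem stmt8 {Γ : Type*} (Ssub : Γ → Set (Equiv.Perm ℕ+))
    (hsub : ∀ α, Ssub α ⊆ Tfin)
    (hid : ∀ α, 1 ∈ Ssub α)
    (hclosed : ∀ α, ∀ σ ∈ Ssub α, ∀ τ ∈ Ssub α, σ * τ ∈ Ssub α)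
    (hgen : (Subsemigroup.closure (⋃ α, Ssub α) : Set (Equiv.Perm ℕ+)) = Tfin)
    (hmulti : ∀ l l' : List (Γ × Equiv.Perm ℕ+), (l.map Prod.fst).Nodup →
      (∀ p ∈ l, p.2 ∈ Ssub p.1) → l.Perm l' → ∀ x : Bset,
      (l.map Prod.snd).foldl (fun p σ => fPerm σ p) x =
        (l'.map Prod.snd).foldl (fun p σ => fPerm σ p) x) :
    ∃ α, ¬ IsDistalAction (permAct (Ssub α)) := by
  by_contra hcon
  push_neg at hcon
  -- each orbit is bounded
  have hbdd : ∀ α (j : ℕ+), ∃ N : ℕ, ∀ σ ∈ Ssub α, ((σ j : ℕ+) : ℕ) ≤ N := by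
    intro α j
    by_contra hb
    push_neg at hb
    exact not_distal_of_unbounded (Ssub α) j hb (hcon α)
  -- elements of distinct members commute
  have hcomm : ∀ α β, α ≠ β → ∀ s ∈ Ssub α, ∀ t ∈ Ssub β, s * t = t * s := by
    intro α β hne s hsm t htm
    have h := hmulti [(α, s), (β, t)] [(β, t), (α, s)]
      (by simp [hne])
      (by
        intro p hp
        simp only [List.mem_cons, List.not_mem_nil, or_false, List.mem_singleton] at hp
        rcases hp with h | h <;> subst h <;> assumption)
      (List.Perm.swap _ _ _)
    apply Equiv.ext
    intro k
    have hk := h (bpt k)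
    simp only [List.map_cons, List.map_nil, List.foldl_cons, List.foldl_nil, fPerm_bpt] at hk
    have h2 := bpt_injective hk
    simp only [Equiv.Perm.mul_apply]
    exact h2.symm
  -- each member is closed under conjugation by the closure
  have hconj : ∀ g ∈ Subsemigroup.closure (⋃ α, Ssub α),
      ∀ α, ∀ u ∈ Ssub α, g * u * g⁻¹ ∈ Ssub α := by
    intro g hg
    induction hg using Subsemigroup.closure_induction with
    | mem x hx =>
      intro α u hu
      rcases Set.mem_iUnion.1 hx with ⟨β, hβ⟩
      by_cases hx0 : x ∈ Ssub α
      · have hxi : x⁻¹ ∈ Ssub α := inv_mem_aux _ (hsub α) (hid α) (hclosed α) hx0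
        exact hclosed α _ (hclosed α _ hx0 _ hu) _ hxi
      · have hne : α ≠ β := fun h => hx0 (h ▸ hβ)
        have hcm := hcomm α β hne u hu x hβ
        have hxu : x * u * x⁻¹ = u := by rw [← hcm]; group
        rw [hxu]; exact hu
    | mul x y hx hy ihx ihy =>
      intro α u hu
      have h1 : y * u * y⁻¹ ∈ Ssub α := ihy α u hu
      have h2 := ihx α _ h1
      have h3 : x * (y * u * y⁻¹) * x⁻¹ = (x * y) * u * (x * y)⁻¹ := by group
      rw [← h3]; exact h2
  -- some member contains a nontrivial element
  have hex : ∃ α, ∃ s ∈ Ssub α, ∃ b : ℕ+, s b ≠ b := by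
    by_contra he
    push_neg at he
    have hsub1 : (⋃ α, Ssub α) ⊆ ((⟨{1}, by
        rintro a b ha hb
        simp only [Set.mem_singleton_iff] at *
        rw [ha, hb, mul_one]⟩ : Subsemigroup (Equiv.Perm ℕ+)) : Set (Equiv.Perm ℕ+)) := by
      intro σ hσ
      rcases Set.mem_iUnion.1 hσ with ⟨α, hα⟩
      have : σ = 1 := Equiv.ext (fun k => he α σ hα k)
      simp [this]
    have hswap : Equiv.swap (1:ℕ+) 2 ∈ Subsemigroup.closure (⋃ α, Ssub α) := by
      have h := swap_mem_Tfin 1 2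
      rw [← hgen] at h
      exact h
    have h1 := Subsemigroup.closure_le.2 hsub1 hswap
    simp only [Subsemigroup.mem_mk, Set.mem_singleton_iff] at h1
    have h2 := congrArg (fun e : Equiv.Perm ℕ+ => e 1) h1
    simp only [Equiv.swap_apply_left, Equiv.Perm.one_apply] at h2
    exact absurd h2 (by decide)
  obtain ⟨α₀, s, hs, b, hsb⟩ := hex
  obtain ⟨N, hN⟩ := hbdd α₀ b
  set c := s b with hc
  have hnn : 0 < (b : ℕ) + (c : ℕ) + N + 1 := by positivity
  set n : ℕ+ := ⟨(b : ℕ) + (c : ℕ) + N + 1, hnn⟩ with hndef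
  have hbc : b ≠ c := Ne.symm hsb
  have hbn : b ≠ n := by
    intro h
    have h' := congrArg PNat.val h
    change (b : ℕ) = (b : ℕ) + (c : ℕ) + N + 1 at h'
    omega
  have hcn : c ≠ n := by
    intro h
    have h' := congrArg PNat.val h
    change (c : ℕ) = (b : ℕ) + (c : ℕ) + N + 1 at h'
    omega
  have hg : Equiv.swap c n ∈ Subsemigroup.closure (⋃ α, Ssub α) := by
    have h := swap_mem_Tfin c n
    rw [← hgen] at h
    exact h
  have ht := hconj _ hg α₀ s hs
  have htb : ((Equiv.swap c n) * s * (Equiv.swap c n)⁻¹) b = n := by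
    rw [Equiv.swap_inv, Equiv.Perm.mul_apply, Equiv.Perm.mul_apply,
      Equiv.swap_apply_of_ne_of_ne hbc hbn, ← hc]
    exact Equiv.swap_apply_left c n
  have hle := hN _ ht
  rw [htb] at hle
  change (b : ℕ) + (c : ℕ) + N + 1 ≤ N at hle
  omega
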